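/- For every integer dimension d ≥ 1, every finite subset S of the integer lattice ℤ^d, and every point p ∈ S, the sum of Euclidean distances ∑_{x∈S} ‖p − x‖₂ is at least (|S| − 1)^{1+1/d}/4. Consequently, for any injective map f of a finite set V into ℤ^d, the pulled-back metric dist(u,v) = ‖f(u) − f(v)‖₂ satisfies the d-dimensional spreading constraints, so the spreading-metric LP is a relaxation of d-dimAP+. -/

import Mathlib

open scoped BigOperators

/-- Euclidean distance between two points of the integer lattice `ℤ^d`. -/
noncomputable def eDist {d : ℕ} (p q : Fin d → ℤ) : ℝ :=
  Real.sqrt (∑ i, ((p i : ℝ) - (q i : ℝ)) ^ 2)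

/-!
Induct on `|S|` by deleting the point `y ∈ S` farthest from `p`. All of `S` lies in the lattice
box of side `2 ⌊‖p - y‖⌋ + 1` around `p`, so `|S| ≤ (2 ‖p - y‖ + 1) ^ d`. By Bernoulli's
inequality the bound increases by at most `(1 + 1/d) (|S| - 1) ^ (1/d) / 4` when `|S|` grows by
one, and this is at most `‖p - y‖` as soon as `|S| - 1 > 4 ^ d`. Below that threshold the bound
is at most `|S| - 1`, and every point of `S` other than `p` is at distance at least `1` from `p`.
-/

namespace LatticeSpreading

variable {d : ℕ}

lemma eDist_self (p : Fin d → ℤ) : eDist p p = 0 := by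
  simp [eDist]

lemma eDist_nonneg (p q : Fin d → ℤ) : 0 ≤ eDist p q :=
  Real.sqrt_nonneg _

lemma abs_sub_le_eDist (p q : Fin d → ℤ) (i : Fin d) : |(p i : ℝ) - q i| ≤ eDist p q :=
  Real.abs_le_sqrt <| Finset.single_le_sum (f := fun j => ((p j : ℝ) - q j) ^ 2)
    (fun _ _ => sq_nonneg _) (Finset.mem_univ i)

lemma one_le_eDist {p q : Fin d → ℤ} (h : p ≠ q) : 1 ≤ eDist p q := by
  obtain ⟨i, hi⟩ := Function.ne_iff.mp h
  have hi' : (1 : ℝ) ≤ |(p i : ℝ) - q i| := by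
    exact_mod_cast Int.one_le_abs (sub_ne_zero.mpr hi)
  exact hi'.trans (abs_sub_le_eDist p q i)

lemma card_le_of_natAbs_sub_le (S : Finset (Fin d → ℤ)) (p : Fin d → ℤ) (r : ℕ)
    (h : ∀ x ∈ S, ∀ i, (x i - p i).natAbs ≤ r) : S.card ≤ (2 * r + 1) ^ d := by
  have hbox : S ⊆ Finset.Icc (fun i => p i - r) (fun i => p i + r) := fun x hx =>
    Finset.mem_Icc.mpr ⟨fun i => by have := h x hx i; dsimp only; omega,
      fun i => by have := h x hx i; dsimp only; omega⟩
  calc S.card ≤ (Finset.Icc (fun i => p i - (r : ℤ)) (fun i => p i + r)).card :=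
        Finset.card_le_card hbox
    _ = (2 * r + 1) ^ d := by
        have hside : ∀ i, (p i + r + 1 - (p i - r)).toNat = 2 * r + 1 := fun i => by omega
        simp [Pi.card_Icc, hside]

lemma card_le_of_eDist_le (S : Finset (Fin d → ℤ)) (p : Fin d → ℤ) {D : ℝ} (hD : 0 ≤ D)
    (h : ∀ x ∈ S, eDist p x ≤ D) : (S.card : ℝ) ≤ (2 * D + 1) ^ d := by
  have hbox : S.card ≤ (2 * ⌊D⌋₊ + 1) ^ d := by
    refine card_le_of_natAbs_sub_le S p ⌊D⌋₊ fun x hx i => Nat.le_floor ?_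
    rw [Nat.cast_natAbs, Int.cast_abs, Int.cast_sub, abs_sub_comm]
    exact (abs_sub_le_eDist p x i).trans (h x hx)
  calc (S.card : ℝ) ≤ ((2 * ⌊D⌋₊ + 1 : ℕ) : ℝ) ^ d := by exact_mod_cast hbox
    _ ≤ (2 * D + 1) ^ d := by
        push_cast
        gcongr
        exact Nat.floor_le hD

lemma card_sub_one_le_sum_eDist {S : Finset (Fin d → ℤ)} {p : Fin d → ℤ} (hp : p ∈ S) :
    (S.card : ℝ) - 1 ≤ ∑ x ∈ S, eDist p x := by
  rw [← Finset.add_sum_erase S _ hp, eDist_self, zero_add, ← Finset.cast_card_erase_of_mem hp]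
  simpa using Finset.card_nsmul_le_sum (S.erase p) (eDist p) 1
    fun x hx => one_le_eDist (Finset.ne_of_mem_erase hx).symm

lemma rpow_sub_rpow_sub_one_le {p m : ℝ} (hp : 1 ≤ p) (hm : 1 ≤ m) :
    m ^ p - (m - 1) ^ p ≤ p * m ^ (p - 1) := by
  have hm0 : 0 < m := by linarith
  have hbern := one_add_mul_self_le_rpow_one_add
    (neg_le_neg (inv_le_one_of_one_le₀ hm)) hp
  have hsplit : (m - 1) ^ p = m ^ p * (1 + -m⁻¹) ^ p := by
    rw [← Real.mul_rpow hm0.le (by linarith [inv_le_one_of_one_le₀ hm])]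
    congr 1
    field_simp
    ring
  rw [hsplit, Real.rpow_sub_one hm0.ne']
  have hmp : 0 ≤ m ^ p := Real.rpow_nonneg hm0.le p
  have := mul_le_mul_of_nonneg_left hbern hmp
  field_simp at this ⊢
  linarith

noncomputable def spreadingBound (d : ℕ) (t : ℝ) : ℝ := t ^ ((1 : ℝ) + 1 / (d : ℝ)) / 4

lemma spreadingBound_eq {t : ℝ} (ht : 0 < t) :
    spreadingBound d t = t * t ^ (d : ℝ)⁻¹ / 4 := by
  rw [spreadingBound, Real.rpow_add ht, Real.rpow_one, one_div]

lemma spreadingBound_le_self (hd : 1 ≤ d) {t : ℝ} (ht : 0 ≤ t) (ht' : t ≤ 4 ^ d) :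
    spreadingBound d t ≤ t := by
  rcases ht.eq_or_lt with rfl | ht
  · rw [spreadingBound, Real.zero_rpow (by positivity)]
    simp
  have hroot : t ^ (d : ℝ)⁻¹ ≤ 4 := by
    rw [Real.rpow_inv_le_iff_of_pos ht.le (by norm_num) (by exact_mod_cast hd), Real.rpow_natCast]
    exact ht'
  rw [spreadingBound_eq ht]
  nlinarith

lemma spreadingBound_le_spreadingBound_sub_one_add (hd : 1 ≤ d) {t D : ℝ} (ht : 4 ^ d < t)
    (hD : 0 ≤ D) (htD : t + 1 ≤ (2 * D + 1) ^ d) :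
    spreadingBound d t ≤ spreadingBound d (t - 1) + D := by
  -- For `d = 1` the estimate is tight and is checked directly; for `d ≥ 2`, `1 + 1/d ≤ 3/2`
  -- leaves room to absorb the rounding `2 D + 1 ≥ t ^ (1/d)`.
  rcases hd.eq_or_lt with rfl | hd2
  · rw [spreadingBound, spreadingBound]
    norm_num at htD ⊢
    linarith [show t ^ 2 - (t - 1) ^ 2 = 2 * t - 1 by ring]
  have hd' : (0 : ℝ) < d := by positivity
  have h4t : (4 : ℝ) ≤ t := le_of_lt (lt_of_le_of_lt (le_self_pow₀ (by norm_num) (by omega)) ht)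
  have hincr := rpow_sub_rpow_sub_one_le (p := 1 + 1 / (d : ℝ))
    (le_add_of_nonneg_right (by positivity)) (by linarith : (1 : ℝ) ≤ t)
  rw [add_sub_cancel_left, one_div] at hincr
  have hroot : 4 < t ^ (d : ℝ)⁻¹ := by
    rw [Real.lt_rpow_inv_iff_of_pos (by norm_num) (by linarith) hd', Real.rpow_natCast]
    exact ht
  have hroot_succ : (t + 1) ^ (d : ℝ)⁻¹ ≤ 2 * D + 1 := by
    rw [Real.rpow_inv_le_iff_of_pos (by linarith) (by linarith) hd', Real.rpow_natCast]
    exact htD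
  have hmono : t ^ (d : ℝ)⁻¹ ≤ (t + 1) ^ (d : ℝ)⁻¹ :=
    Real.rpow_le_rpow (by linarith) (by linarith) (by positivity)
  have hinv : (d : ℝ)⁻¹ ≤ 2⁻¹ := (inv_le_inv₀ hd' two_pos).mpr (by exact_mod_cast hd2)
  have hexp := mul_le_mul_of_nonneg_right (by linarith : 1 + (d : ℝ)⁻¹ ≤ 3 / 2)
    (by linarith : 0 ≤ t ^ (d : ℝ)⁻¹)
  rw [spreadingBound, spreadingBound, one_div]
  linarith

theorem spreadingBound_le_sum_eDist (hd : 1 ≤ d) (S : Finset (Fin d → ℤ)) :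
    ∀ p ∈ S, spreadingBound d (S.card - 1) ≤ ∑ x ∈ S, eDist p x := by
  induction S using Finset.strongInduction with
  | H S ih =>
  intro p hp
  by_cases hsmall : (S.card : ℝ) - 1 ≤ 4 ^ d
  · have hcard : (1 : ℝ) ≤ S.card := by exact_mod_cast Finset.card_pos.mpr ⟨p, hp⟩
    exact (spreadingBound_le_self hd (by linarith) hsmall).trans (card_sub_one_le_sum_eDist hp)
  obtain ⟨y, hyS, hy⟩ := S.exists_max_image (eDist p) ⟨p, hp⟩
  have hbox := card_le_of_eDist_le S p (eDist_nonneg p y) hy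
  have hyp : y ≠ p := by
    rintro rfl
    rw [eDist_self] at hbox
    have hpow : (1 : ℝ) ≤ 4 ^ d := one_le_pow₀ (by norm_num)
    rw [mul_zero, zero_add, one_pow] at hbox
    linarith
  have hrest := ih (S.erase y) (Finset.erase_ssubset hyS) p (Finset.mem_erase.mpr ⟨hyp.symm, hp⟩)
  rw [Finset.cast_card_erase_of_mem hyS] at hrest
  rw [← Finset.add_sum_erase S _ hyS]
  calc spreadingBound d (S.card - 1)
      ≤ spreadingBound d (S.card - 1 - 1) + eDist p y :=
        spreadingBound_le_spreadingBound_sub_one_add hd (not_le.mp hsmall) (eDist_nonneg p y)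
          (by linarith)
    _ ≤ eDist p y + ∑ x ∈ S.erase y, eDist p x := by linarith

end LatticeSpreading

theorem lattice_spreading (d : ℕ) (hd : 1 ≤ d) :
    (∀ S : Finset (Fin d → ℤ), ∀ p ∈ S,
      ((S.card : ℝ) - 1) ^ ((1 : ℝ) + 1 / (d : ℝ)) / 4 ≤ ∑ x ∈ S, eDist p x) ∧
    (∀ (V : Type) (f : V → (Fin d → ℤ)), Function.Injective f →
      ∀ S : Finset V, ∀ u ∈ S,
        ((S.card : ℝ) - 1) ^ ((1 : ℝ) + 1 / (d : ℝ)) / 4 ≤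
          ∑ v ∈ S, eDist (f u) (f v)) := by
  refine ⟨LatticeSpreading.spreadingBound_le_sum_eDist hd, fun V f hf S u hu => ?_⟩
  rw [← Finset.card_image_of_injective S hf, ← Finset.sum_image fun a _ b _ h => hf h]
  exact LatticeSpreading.spreadingBound_le_sum_eDist hd _ _ (Finset.mem_image_of_mem f hu)
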